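/- For all a, b ∈ 𝔤^♮ such that a is central in 𝔤^♮ (⁅a,x⁆ = 0 for all x ∈ 𤤮^♮): κ_𝔤(a,b) = 2·tr_{𝔤₁/₂}(ad(a)∘ad(b)). Consequently, if κ₀ is a 𝔤-invariant symmetric bilinear form on 𝔤 and k, h∨ ∈ ℂ satisfy κ_𝔤 = 2h∨·κ₀, then for a, b both in the centre of 𝔤^♮ the form κ^♮ := k·κ₀ + (1/2)·(κ_𝔤 − κ_{𝔤₀} − κ_{𝔤₁/₂}) satisfies κ^♮(a,b) = (k + h∨/2)·κ₀(a,b), where κ_{𝔤₀} and κ_{𝔤₁/₂} are the trace forms of the 𝔤^♮-modules 𝔤₀ and 𝔤₁/₂. -/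

import Mathlib

open Module LinearMap

/-- The eigenspace of `ad x` with eigenvalue `μ`; for the minimal grading given by an
sl₂-triple `(e,h,f)`, the graded piece `𝔤_j` is `adEigC h (2j)`. -/
def adEigC {g : Type*} [LieRing g] [LieAlgebra ℂ g] (x : g) (μ : ℂ) : Submodule ℂ g :=
  Module.End.eigenspace (LieAlgebra.ad ℂ g x) μ

/-- The trace of an endomorphism `f` restricted to an `f`-invariant subspace `W`. -/
noncomputable def traceOn {g : Type*} [AddCommGroup g] [Module ℂ g]
    (W : Submodule ℂ g) (f : g →ₗ[ℂ] g) (hf : ∀ x ∈ W, f x ∈ W) : ℂ :=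
  LinearMap.trace ℂ W (f.restrict hf)

/-!
Since `a` and `b` commute with `h`, `ad a ∘ ad b` preserves every weight space `𝔤_j`, so its
trace splits over `j ∈ {-1, -1/2, 0, 1/2, 1}`. Modulo `ℂ h`, every `x ∈ 𝔤₀` lies in `𝔤^♮`: the
correction `x + c h` with `[e, x] = 2c e` is killed by `e`, and then `[f, x + c h]` is a
primitive vector of weight `-2`, hence zero. So the central element `a` kills `𝔤₀`, and then also
`𝔤₋₁`, since `[a, y]` is again primitive of negative weight. On `𝔤₁ = ℂ e` the operator vanishes
because `[b, e] = 0`. Finally `ad e : 𝔤_{-1/2} → 𝔤_{1/2}` is an isomorphism commuting with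
`ad a ∘ ad b`, so the two half-integral pieces contribute equal traces.
-/


theorem LinearMap.trace_restrict_eq_of_injOn {K M : Type*} [Field K] [AddCommGroup M]
    [Module K M] [FiniteDimensional K M] {V W : Submodule K M} {T E F : Module.End K M}
    (hTV : ∀ x ∈ V, T x ∈ V) (hTW : ∀ x ∈ W, T x ∈ W)
    (hE : ∀ x ∈ V, E x ∈ W) (hF : ∀ x ∈ W, F x ∈ V)
    (hEinj : Set.InjOn E V) (hFinj : Set.InjOn F W) (hET : Commute E T) :
    trace K V (T.restrict hTV) = trace K W (T.restrict hTW) := by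
  have hE' : Function.Injective (E.restrict hE) := fun x y hxy =>
    Subtype.ext (hEinj x.2 y.2 (congrArg Subtype.val hxy))
  have hF' : Function.Injective (F.restrict hF) := fun x y hxy =>
    Subtype.ext (hFinj x.2 y.2 (congrArg Subtype.val hxy))
  let φ : V ≃ₗ[K] W := (E.restrict hE).linearEquivOfInjective hE'
    (le_antisymm (finrank_le_finrank_of_injective hE') (finrank_le_finrank_of_injective hF'))
  have hconj : φ.conj (T.restrict hTV) = T.restrict hTW := by
    ext y
    obtain ⟨x, rfl⟩ := φ.surjective y
    rw [LinearEquiv.conj_apply_apply, φ.symm_apply_apply]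
    exact LinearMap.congr_fun hET.eq x
  rw [← hconj, trace_conj']

theorem traceOn_eq_zero {g : Type*} [AddCommGroup g] [Module ℂ g] {W : Submodule ℂ g}
    {T : g →ₗ[ℂ] g} (hT : ∀ x ∈ W, T x ∈ W) (hT₀ : ∀ x ∈ W, T x = 0) :
    traceOn W T hT = 0 := by
  have : T.restrict hT = 0 := by
    ext x
    simpa using hT₀ x x.2
  rw [traceOn, this, map_zero]

section AdEigenspaces

variable {g : Type*} [LieRing g] [LieAlgebra ℂ g]

theorem mem_adEigC_iff {x y : g} {μ : ℂ} : y ∈ adEigC x μ ↔ ⁅x, y⁆ = μ • y :=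
  Module.End.mem_eigenspace_iff

theorem lie_mem_adEigC_of_add_eq {x y z : g} {μ ν ρ : ℂ} (hy : ⁅x, y⁆ = ν • y)
    (hz : z ∈ adEigC x μ) (hρ : μ + ν = ρ) : ⁅y, z⁆ ∈ adEigC x ρ := by
  rw [mem_adEigC_iff] at hz ⊢
  rw [leibniz_lie, hy, hz, smul_lie, lie_smul, ← hρ, add_smul]
  abel

theorem lie_mem_adEigC_of_lie_eq_zero {x y z : g} {μ : ℂ} (hy : ⁅x, y⁆ = 0)
    (hz : z ∈ adEigC x μ) : ⁅y, z⁆ ∈ adEigC x μ :=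
  lie_mem_adEigC_of_add_eq (by rw [hy, zero_smul]) hz (add_zero μ)

theorem commute_ad_of_lie_eq_zero {x y : g} (hxy : ⁅x, y⁆ = 0) :
    Commute (LieAlgebra.ad ℂ g x) (LieAlgebra.ad ℂ g y) := by
  refine LinearMap.ext fun z => ?_
  change ⁅x, ⁅y, z⁆⁆ = ⁅y, ⁅x, z⁆⁆
  rw [leibniz_lie, hxy, zero_lie, zero_add]

theorem adEigC_neg (x : g) (μ : ℂ) : adEigC (-x) (-μ) = adEigC x μ := by
  ext y
  simp only [mem_adEigC_iff, neg_lie, neg_smul, neg_inj]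

theorem trace_eq_sum_traceOn_adEigC [FiniteDimensional ℂ g] {x : g} {s : Finset ℂ}
    (hs : ⨆ μ ∈ s, adEigC x μ = ⊤) {T : Module.End ℂ g}
    (hT : ∀ μ, ∀ y ∈ adEigC x μ, T y ∈ adEigC x μ) :
    trace ℂ g T = ∑ μ ∈ s, traceOn (adEigC x μ) T (hT μ) := by
  classical
  have hInternal : DirectSum.IsInternal fun μ : s => adEigC x μ :=
    DirectSum.isInternal_submodule_of_iSupIndep_of_iSup_eq_top
      ((Module.End.eigenspaces_iSupIndep _).comp Subtype.val_injective)
      (by rwa [iSup_subtype'] at hs)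
  rw [trace_eq_sum_trace_restrict hInternal fun μ => hT μ]
  exact Finset.sum_coe_sort s fun μ => traceOn (adEigC x μ) T (hT μ)

end AdEigenspaces

section Sl2Triple

variable {g : Type*} [LieRing g] [LieAlgebra ℂ g] [FiniteDimensional ℂ g] {e h f : g}
  (hhe : ⁅h, e⁆ = (2 : ℂ) • e) (hhf : ⁅h, f⁆ = (-2 : ℂ) • f) (hef : ⁅e, f⁆ = h)
include hhe hhf hef

theorem eq_zero_of_lie_eq_zero_of_ne_natCast {μ : ℂ} (hμ : ∀ n : ℕ, μ ≠ n) {y : g}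
    (hy : ⁅h, y⁆ = μ • y) (hey : ⁅e, y⁆ = 0) : y = 0 := by
  by_contra hy0
  rcases eq_or_ne h 0 with rfl | hne
  · exact hμ 0 (by simpa [hy0] using hy.symm)
  have t : IsSl2Triple h e f :=
    ⟨hne, hef, by rw [hhe, ← Nat.cast_smul_eq_nsmul ℂ 2 e]; norm_num,
      by rw [hhf, ← Nat.cast_smul_eq_nsmul ℂ 2 f, ← neg_smul]; norm_num⟩
  obtain ⟨n, hn⟩ := (⟨hy0, hy, hey⟩ : t.HasPrimitiveVectorWith y μ).exists_nat
  exact hμ n hn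

theorem injOn_ad_adEigC_of_ne_natCast {μ : ℂ} (hμ : ∀ n : ℕ, μ ≠ n) :
    Set.InjOn (LieAlgebra.ad ℂ g e) (adEigC h μ) :=
  (Set.injOn_iff_map_eq_zero _ _).mpr fun _ hy hey =>
    eq_zero_of_lie_eq_zero_of_ne_natCast hhe hhf hef hμ (mem_adEigC_iff.mp hy) hey

theorem traceOn_adEigC_neg_one_eq {T : Module.End ℂ g} (hT : Commute (LieAlgebra.ad ℂ g e) T)
    (hTneg : ∀ x ∈ adEigC h (-1), T x ∈ adEigC h (-1))
    (hTpos : ∀ x ∈ adEigC h 1, T x ∈ adEigC h 1) :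
    traceOn (adEigC h (-1)) T hTneg = traceOn (adEigC h 1) T hTpos := by
  -- `ad f` is injective on `𝔤_{1/2}` because `(-h, f, e)` is again a triple, of weight `-1` there.
  have hfe : ⁅f, e⁆ = -h := by rw [← lie_skew, hef]
  have hhf' : ⁅-h, f⁆ = (2 : ℂ) • f := by rw [neg_lie, hhf]; module
  have hhe' : ⁅-h, e⁆ = (-2 : ℂ) • e := by rw [neg_lie, hhe]; module
  have hneg_one : ∀ n : ℕ, (-1 : ℂ) ≠ n := fun n => by exact_mod_cast (by omega : (-1 : ℤ) ≠ n)
  refine LinearMap.trace_restrict_eq_of_injOn (E := LieAlgebra.ad ℂ g e)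
    (F := LieAlgebra.ad ℂ g f) hTneg hTpos
    (fun x hx => lie_mem_adEigC_of_add_eq hhe hx (by norm_num))
    (fun x hx => lie_mem_adEigC_of_add_eq hhf hx (by norm_num))
    (injOn_ad_adEigC_of_ne_natCast hhe hhf hef hneg_one) ?_ hT
  rw [← adEigC_neg h 1]
  exact injOn_ad_adEigC_of_ne_natCast hhf' hhe' hfe hneg_one

theorem exists_add_smul_mem_centralizer (hmin : adEigC h 2 ≤ ℂ ∙ e) {x : g}
    (hx : x ∈ adEigC h 0) :
    ∃ c : ℂ, ⁅e, x + c • h⁆ = 0 ∧ ⁅h, x + c • h⁆ = 0 ∧ ⁅f, x + c • h⁆ = 0 := by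
  obtain ⟨c, hc⟩ :=
    Submodule.mem_span_singleton.mp (hmin (lie_mem_adEigC_of_add_eq hhe hx (zero_add 2)))
  refine ⟨c / 2, ?_⟩
  have hh : ⁅h, x + (c / 2) • h⁆ = 0 := by
    rw [lie_add, lie_smul, lie_self, smul_zero, mem_adEigC_iff.mp hx, zero_smul, add_zero]
  have he : ⁅e, x + (c / 2) • h⁆ = 0 := by
    rw [lie_add, lie_smul, ← lie_skew e h, hhe, ← hc]
    module
  refine ⟨he, hh, eq_zero_of_lie_eq_zero_of_ne_natCast hhe hhf hef (μ := -2)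
    (fun n => by exact_mod_cast (by omega : (-2 : ℤ) ≠ n)) ?_ ?_⟩
  · have hh₀ : x + (c / 2) • h ∈ adEigC h 0 := mem_adEigC_iff.mpr (by rw [hh, zero_smul])
    exact mem_adEigC_iff.mp (lie_mem_adEigC_of_add_eq hhf hh₀ (zero_add _))
  · rw [leibniz_lie, hef, hh, he, lie_zero, add_zero]

theorem lie_eq_zero_of_mem_adEigC_zero (hmin : adEigC h 2 ≤ ℂ ∙ e) {a : g}
    (hah : ⁅h, a⁆ = 0)
    (hacent : ∀ x : g, ⁅e, x⁆ = 0 → ⁅h, x⁆ = 0 → ⁅f, x⁆ = 0 → ⁅a, x⁆ = 0) {x : g}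
    (hx : x ∈ adEigC h 0) : ⁅a, x⁆ = 0 := by
  obtain ⟨c, he, hh, hf⟩ := exists_add_smul_mem_centralizer hhe hhf hef hmin hx
  simpa only [lie_add, lie_smul, ← lie_skew a h, hah, neg_zero, smul_zero, add_zero]
    using hacent _ he hh hf

theorem lie_eq_zero_of_mem_adEigC_neg_two (hmin : adEigC h 2 ≤ ℂ ∙ e) {a : g}
    (hae : ⁅e, a⁆ = 0) (hah : ⁅h, a⁆ = 0)
    (hacent : ∀ x : g, ⁅e, x⁆ = 0 → ⁅h, x⁆ = 0 → ⁅f, x⁆ = 0 → ⁅a, x⁆ = 0) {y : g}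
    (hy : y ∈ adEigC h (-2)) : ⁅a, y⁆ = 0 := by
  refine eq_zero_of_lie_eq_zero_of_ne_natCast hhe hhf hef
    (fun n => by exact_mod_cast (by omega : (-2 : ℤ) ≠ n))
    (mem_adEigC_iff.mp (lie_mem_adEigC_of_lie_eq_zero hah hy)) ?_
  rw [leibniz_lie, hae, zero_lie, zero_add]
  exact lie_eq_zero_of_mem_adEigC_zero hhe hhf hef hmin hah hacent
    (lie_mem_adEigC_of_add_eq hhe hy (by norm_num))

theorem traceOn_adEigC_zero_eq_zero (hmin : adEigC h 2 ≤ ℂ ∙ e) {a b : g}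
    (hah : ⁅h, a⁆ = 0) (hbh : ⁅h, b⁆ = 0)
    (hacent : ∀ x : g, ⁅e, x⁆ = 0 → ⁅h, x⁆ = 0 → ⁅f, x⁆ = 0 → ⁅a, x⁆ = 0)
    (hA : ∀ x ∈ adEigC h 0, (LieAlgebra.ad ℂ g a ∘ₗ LieAlgebra.ad ℂ g b) x ∈ adEigC h 0) :
    traceOn (adEigC h 0) (LieAlgebra.ad ℂ g a ∘ₗ LieAlgebra.ad ℂ g b) hA = 0 :=
  traceOn_eq_zero hA fun _ hx => lie_eq_zero_of_mem_adEigC_zero hhe hhf hef hmin hah hacent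
    (lie_mem_adEigC_of_lie_eq_zero hbh hx)

theorem killingForm_eq_two_mul_traceOn_adEigC_one
    (hdiag : adEigC h (-2) ⊔ adEigC h (-1) ⊔ adEigC h 0 ⊔ adEigC h 1 ⊔ adEigC h 2 = ⊤)
    (hmin : adEigC h 2 ≤ ℂ ∙ e) {a b : g} (hae : ⁅e, a⁆ = 0) (hah : ⁅h, a⁆ = 0)
    (hbe : ⁅e, b⁆ = 0) (hbh : ⁅h, b⁆ = 0)
    (hacent : ∀ x : g, ⁅e, x⁆ = 0 → ⁅h, x⁆ = 0 → ⁅f, x⁆ = 0 → ⁅a, x⁆ = 0)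
    (hA : ∀ x ∈ adEigC h 1, (LieAlgebra.ad ℂ g a ∘ₗ LieAlgebra.ad ℂ g b) x ∈ adEigC h 1) :
    killingForm ℂ g a b =
      2 * traceOn (adEigC h 1) (LieAlgebra.ad ℂ g a ∘ₗ LieAlgebra.ad ℂ g b) hA := by
  set A := LieAlgebra.ad ℂ g a ∘ₗ LieAlgebra.ad ℂ g b
  have hAμ : ∀ μ, ∀ x ∈ adEigC h μ, A x ∈ adEigC h μ := fun _ _ hx =>
    lie_mem_adEigC_of_lie_eq_zero hah (lie_mem_adEigC_of_lie_eq_zero hbh hx)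
  have hs : ⨆ μ ∈ ({-2, -1, 0, 1, 2} : Finset ℂ), adEigC h μ = ⊤ := by
    simpa only [Finset.iSup_insert, Finset.iSup_singleton, sup_assoc] using hdiag
  have hneg_two : traceOn (adEigC h (-2)) A (hAμ _) = 0 := traceOn_eq_zero _ fun _ hx =>
    lie_eq_zero_of_mem_adEigC_neg_two hhe hhf hef hmin hae hah hacent
      (lie_mem_adEigC_of_lie_eq_zero hbh hx)
  have hneg_one : traceOn (adEigC h (-1)) A (hAμ _) = traceOn (adEigC h 1) A hA :=
    traceOn_adEigC_neg_one_eq hhe hhf hef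
      ((commute_ad_of_lie_eq_zero hae).mul_right (commute_ad_of_lie_eq_zero hbe)) _ _
  have hzero : traceOn (adEigC h 0) A (hAμ _) = 0 :=
    traceOn_adEigC_zero_eq_zero hhe hhf hef hmin hah hbh hacent _
  have htwo : traceOn (adEigC h 2) A (hAμ _) = 0 := traceOn_eq_zero _ fun x hx => by
    obtain ⟨c, rfl⟩ := Submodule.mem_span_singleton.mp (hmin hx)
    change ⁅a, ⁅b, c • e⁆⁆ = 0
    rw [lie_smul, ← lie_skew b e, hbe, neg_zero, smul_zero, lie_zero]
  have hK : killingForm ℂ g a b = trace ℂ g A := LieModule.traceForm_apply_apply ℂ g g a b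
  rw [hK, trace_eq_sum_traceOn_adEigC hs hAμ,
    Finset.sum_insert (by norm_num), Finset.sum_insert (by norm_num),
    Finset.sum_insert (by norm_num), Finset.sum_pair (by norm_num),
    hneg_two, hneg_one, hzero, htwo]
  ring

end Sl2Triple

theorem killingForm_on_center_of_centralizer_general
    (g : Type*) [LieRing g] [LieAlgebra ℂ g] [FiniteDimensional ℂ g]
    (e h f : g)
    (hhe : ⁅h, e⁆ = (2 : ℂ) • e) (hhf : ⁅h, f⁆ = (-2 : ℂ) • f) (hef : ⁅e, f⁆ = h)
    (hdiag : adEigC h (-2) ⊔ adEigC h (-1) ⊔ adEigC h 0 ⊔ adEigC h 1 ⊔ adEigC h 2 = ⊤)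
    (hmin : adEigC h 2 = Submodule.span ℂ {e})
    (hstab : ∀ a : g, ⁅h, a⁆ = 0 → ∀ μ : ℂ, ∀ x ∈ adEigC h μ, ⁅a, x⁆ ∈ adEigC h μ)
    (a b : g)
    (hae : ⁅e, a⁆ = 0) (hah : ⁅h, a⁆ = 0)
    (hbe : ⁅e, b⁆ = 0) (hbh : ⁅h, b⁆ = 0)
    (hacent : ∀ x : g, ⁅e, x⁆ = 0 → ⁅h, x⁆ = 0 → ⁅f, x⁆ = 0 → ⁅a, x⁆ = 0) :
    killingForm ℂ g a b
      = 2 * traceOn (adEigC h 1) ((LieAlgebra.ad ℂ g a) ∘ₗ (LieAlgebra.ad ℂ g b))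
          (fun x hx => hstab a hah 1 _ (hstab b hbh 1 x hx))
    ∧ ∀ (κ₀ : LinearMap.BilinForm ℂ g),
        (∀ x y : g, κ₀ x y = κ₀ y x) →
        (∀ c x y : g, κ₀ ⁅c, x⁆ y + κ₀ x ⁅c, y⁆ = 0) →
        ∀ k hV : ℂ, (∀ x y : g, killingForm ℂ g x y = 2 * hV * κ₀ x y) →
        (∀ x : g, ⁅e, x⁆ = 0 → ⁅h, x⁆ = 0 → ⁅f, x⁆ = 0 → ⁅b, x⁆ = 0) →
          k * κ₀ a b + (1 / 2) * (killingForm ℂ g a b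
              - traceOn (adEigC h 0) ((LieAlgebra.ad ℂ g a) ∘ₗ (LieAlgebra.ad ℂ g b))
                  (fun x hx => hstab a hah 0 _ (hstab b hbh 0 x hx))
              - traceOn (adEigC h 1) ((LieAlgebra.ad ℂ g a) ∘ₗ (LieAlgebra.ad ℂ g b))
                  (fun x hx => hstab a hah 1 _ (hstab b hbh 1 x hx)))
            = (k + hV / 2) * κ₀ a b := by
  have hκ := killingForm_eq_two_mul_traceOn_adEigC_one hhe hhf hef hdiag hmin.le
    hae hah hbe hbh hacent (fun x hx => hstab a hah 1 _ (hstab b hbh 1 x hx))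
  refine ⟨hκ, fun κ₀ _ _ k hV hκ₀ _ => ?_⟩
  have hzero := traceOn_adEigC_zero_eq_zero hhe hhf hef hmin.le hah hbh hacent
    (fun x hx => hstab a hah 0 _ (hstab b hbh 0 x hx))
  linear_combination (1 / 4 : ℂ) * hκ + (1 / 4 : ℂ) * hκ₀ a b - (1 / 2 : ℂ) * hzero

/-- for `a, b ∈ 𝔤^♮` with `a` central in `𝔤^♮`,
`κ_𝔤(a,b) = 2·tr_{𝔤₁/₂}(ad a ∘ ad b)`; consequently, if `κ_𝔤 = 2h∨·κ₀` with `κ₀` invariant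
symmetric, then for `a, b` both central in `𝔤^♮`,
`κ^♮(a,b) = k·κ₀(a,b) + (1/2)·(κ_𝔤 − κ_{𝔤₀} − κ_{𝔤₁/₂})(a,b) = (k + h∨/2)·κ₀(a,b)`. -/
theorem killingForm_on_center_of_centralizer
    (g : Type*) [LieRing g] [LieAlgebra ℂ g] [FiniteDimensional ℂ g]
    [LieAlgebra.IsSemisimple ℂ g]
    (e h f : g)
    (hhe : ⁅h, e⁆ = (2 : ℂ) • e) (hhf : ⁅h, f⁆ = (-2 : ℂ) • f) (hef : ⁅e, f⁆ = h)
    (hdiag : adEigC h (-2) ⊔ adEigC h (-1) ⊔ adEigC h 0 ⊔ adEigC h 1 ⊔ adEigC h 2 = ⊤)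
    (hmin : adEigC h 2 = Submodule.span ℂ {e})
    (hstab : ∀ a : g, ⁅h, a⁆ = 0 → ∀ μ : ℂ, ∀ x ∈ adEigC h μ, ⁅a, x⁆ ∈ adEigC h μ)
    (a b : g)
    (hae : ⁅e, a⁆ = 0) (hah : ⁅h, a⁆ = 0) (haf : ⁅f, a⁆ = 0)
    (hbe : ⁅e, b⁆ = 0) (hbh : ⁅h, b⁆ = 0) (hbf : ⁅f, b⁆ = 0)
    (hacent : ∀ x : g, ⁅e, x⁆ = 0 → ⁅h, x⁆ = 0 → ⁅f, x⁆ = 0 → ⁅a, x⁆ = 0) :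
    killingForm ℂ g a b
      = 2 * traceOn (adEigC h 1) ((LieAlgebra.ad ℂ g a) ∘ₗ (LieAlgebra.ad ℂ g b))
          (fun x hx => hstab a hah 1 _ (hstab b hbh 1 x hx))
    ∧ ∀ (κ₀ : LinearMap.BilinForm ℂ g),
        (∀ x y : g, κ₀ x y = κ₀ y x) →
        (∀ c x y : g, κ₀ ⁅c, x⁆ y + κ₀ x ⁅c, y⁆ = 0) →
        ∀ k hV : ℂ, (∀ x y : g, killingForm ℂ g x y = 2 * hV * κ₀ x y) →
        (∀ x : g, ⁅e, x⁆ = 0 → ⁅h, x⁆ = 0 → ⁅f, x⁆ = 0 → ⁅b, x⁆ = 0) →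
          k * κ₀ a b + (1 / 2) * (killingForm ℂ g a b
              - traceOn (adEigC h 0) ((LieAlgebra.ad ℂ g a) ∘ₗ (LieAlgebra.ad ℂ g b))
                  (fun x hx => hstab a hah 0 _ (hstab b hbh 0 x hx))
              - traceOn (adEigC h 1) ((LieAlgebra.ad ℂ g a) ∘ₗ (LieAlgebra.ad ℂ g b))
                  (fun x hx => hstab a hah 1 _ (hstab b hbh 1 x hx)))
            = (k + hV / 2) * κ₀ a b :=
  killingForm_on_center_of_centralizer_general g e h f hhe hhf hef hdiag hmin hstab a b hae hah hbe
    hbh hacent
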